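/- arXiv:math/0604288 — 9 statements merged into one kernel-verified Lean document; each statement's English description precedes it below -/
import Mathlib

section
/- For symmetric matrices C, D ∈ S(n,ℝ), let K be the block diagonal 2n×2n symmetric matrix with blocks C and D, and define Q_j(K) as the 4n×4n block matrix [[-K, jJᵀ],[jJ, -K]] where J = J_n is the standard symplectic matrix, and G_j(K) as the 2n×2n matrix [[-C, jI],[jI, -D]]. Then there exists an orthogonal 4n×4n matrix X such that Xᵀ Q_j(K) X is block diagonal with two copies of G_j(K) on the diagonal. -/
open Matrix

/-- The standard `2n × 2n` symplectic matrix `J = [[0, -I],[I, 0]]`. -/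
noncomputable def Jmat (n : ℕ) : Matrix (Fin n ⊕ Fin n) (Fin n ⊕ Fin n) ℝ :=
  fromBlocks 0 (-1) 1 0

/-- `Q_j(K) = [[-K, jJᵀ],[jJ, -K]]`. -/
noncomputable def Qmat (n j : ℕ) (K : Matrix (Fin n ⊕ Fin n) (Fin n ⊕ Fin n) ℝ) :
    Matrix ((Fin n ⊕ Fin n) ⊕ (Fin n ⊕ Fin n)) ((Fin n ⊕ Fin n) ⊕ (Fin n ⊕ Fin n)) ℝ :=
  fromBlocks (-K) ((j : ℝ) • (Jmat n)ᵀ) ((j : ℝ) • Jmat n) (-K)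

/-- `G_j(C,D) = [[-C, jI],[jI, -D]]`. -/
noncomputable def Gmat (n j : ℕ) (C D : Matrix (Fin n) (Fin n) ℝ) :
    Matrix (Fin n ⊕ Fin n) (Fin n ⊕ Fin n) ℝ :=
  fromBlocks (-C) ((j : ℝ) • 1) ((j : ℝ) • 1) (-D)

theorem stmt0 (n j : ℕ) (C D : Matrix (Fin n) (Fin n) ℝ)
    (hC : C.IsSymm) (hD : D.IsSymm)
    (K : Matrix (Fin n ⊕ Fin n) (Fin n ⊕ Fin n) ℝ)
    (hK : K = fromBlocks C 0 0 D) :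
    ∃ X : Matrix ((Fin n ⊕ Fin n) ⊕ (Fin n ⊕ Fin n))
        ((Fin n ⊕ Fin n) ⊕ (Fin n ⊕ Fin n)) ℝ,
      Xᵀ * X = 1 ∧
      Xᵀ * Qmat n j K * X = fromBlocks (Gmat n j C D) 0 0 (Gmat n j C D) := by
  subst hK
  refine ⟨fromBlocks (fromBlocks 1 0 0 0) (fromBlocks 0 0 0 (-1))
      (fromBlocks 0 0 0 1) (fromBlocks 1 0 0 0), ?_, ?_⟩ <;>
    simp only [Qmat, Jmat, Gmat, fromBlocks_transpose, Matrix.transpose_one,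
      Matrix.transpose_zero, Matrix.transpose_neg, fromBlocks_multiply,
      Matrix.fromBlocks_add, Matrix.fromBlocks_neg, Matrix.fromBlocks_smul,
      Matrix.smul_mul, Matrix.mul_smul, smul_zero, smul_neg,
      Matrix.mul_one, Matrix.one_mul, Matrix.mul_zero, Matrix.zero_mul,
      Matrix.mul_neg, Matrix.neg_mul, neg_neg, neg_zero,
      add_zero, zero_add, Matrix.fromBlocks_zero, Matrix.fromBlocks_one]
end

section
/- For symmetric n×n real matrices C, D and j ∈ ℕ with j ≥ 1, the matrix G_j = [[-C, jI],[jI, -D]] satisfies dim ker G_j = dim ker (CD - j²I). -/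
/-!
A kernel vector `(x, y)` of `[[-C, kI], [kI, -D]]` is exactly a solution of `C x = k y`,
`D y = k x`. For `k ≠ 0` the first component is determined by the second, `x = k⁻¹ D y`, and the
system then reduces to `C D y = k² y`; so `y ↦ (k⁻¹ D y, y)` maps `ker (C D - k² I)` isomorphically
onto `ker G`.
-/

open Matrix

namespace Matrix

variable {K m : Type*} [Field K] [Fintype m]

def graphInvSmulMulVec (k : K) (D : Matrix m m K) : (m → K) →ₗ[K] (m ⊕ m → K) where
  toFun y := Sum.elim (k⁻¹ • D *ᵥ y) y
  map_add' y y' := by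
    rw [mulVec_add, smul_add, ← Sum.elim_add_add]
  map_smul' c y := by
    rw [mulVec_smul, smul_comm]
    ext (i | i) <;> rfl

theorem graphInvSmulMulVec_injective (k : K) (D : Matrix m m K) :
    Function.Injective (graphInvSmulMulVec k D) :=
  fun _ _ h => (Sum.elim_eq_iff.mp h).2

variable [DecidableEq m]

theorem fromBlocks_neg_smul_one_mulVec_sumElim_eq_zero_iff (k : K) (C D : Matrix m m K)
    (x y : m → K) :
    fromBlocks (-C) (k • 1) (k • 1) (-D) *ᵥ Sum.elim x y = 0 ↔
      C *ᵥ x = k • y ∧ D *ᵥ y = k • x := by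
  simp only [fromBlocks_mulVec, Sum.elim_comp_inl, Sum.elim_comp_inr, neg_mulVec, smul_mulVec,
    one_mulVec, ← Sum.elim_zero_zero, Sum.elim_eq_iff, neg_add_eq_zero, add_neg_eq_zero]
  exact and_congr_right' eq_comm

theorem mem_ker_mulVecLin_sub_smul_one_iff (A : Matrix m m K) (c : K) (y : m → K) :
    y ∈ LinearMap.ker (A - c • 1).mulVecLin ↔ A *ᵥ y = c • y := by
  rw [LinearMap.mem_ker, mulVecLin_apply, sub_mulVec, smul_mulVec, one_mulVec, sub_eq_zero]

theorem map_graphInvSmulMulVec_ker {k : K} (hk : k ≠ 0) (C D : Matrix m m K) :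
    (LinearMap.ker (C * D - k ^ 2 • 1).mulVecLin).map (graphInvSmulMulVec k D) =
      LinearMap.ker (fromBlocks (-C) (k • 1) (k • 1) (-D)).mulVecLin := by
  ext v
  rw [Submodule.mem_map, LinearMap.mem_ker, mulVecLin_apply]
  constructor
  · rintro ⟨y, hy, rfl⟩
    rw [mem_ker_mulVecLin_sub_smul_one_iff, ← mulVec_mulVec] at hy
    refine (fromBlocks_neg_smul_one_mulVec_sumElim_eq_zero_iff k C D _ _).mpr ⟨?_, ?_⟩
    · rw [mulVec_smul, hy, smul_smul, sq, ← mul_assoc, inv_mul_cancel₀ hk, one_mul]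
    · rw [smul_smul, mul_inv_cancel₀ hk, one_smul]
  · intro hv
    rw [← Sum.elim_comp_inl_inr v] at hv ⊢
    obtain ⟨hCx, hDy⟩ := (fromBlocks_neg_smul_one_mulVec_sumElim_eq_zero_iff k C D _ _).mp hv
    refine ⟨v ∘ Sum.inr, ?_, ?_⟩
    · rw [mem_ker_mulVecLin_sub_smul_one_iff, ← mulVec_mulVec, hDy, mulVec_smul, hCx,
        smul_smul, sq]
    · change Sum.elim (k⁻¹ • D *ᵥ (v ∘ Sum.inr)) (v ∘ Sum.inr) = _
      rw [hDy, smul_smul, inv_mul_cancel₀ hk, one_smul]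

theorem finrank_ker_fromBlocks_neg_smul_one {k : K} (hk : k ≠ 0) (C D : Matrix m m K) :
    Module.finrank K (LinearMap.ker (fromBlocks (-C) (k • 1) (k • 1) (-D)).mulVecLin) =
      Module.finrank K (LinearMap.ker (C * D - k ^ 2 • 1).mulVecLin) := by
  rw [← map_graphInvSmulMulVec_ker hk]
  exact (Submodule.equivMapOfInjective _ (graphInvSmulMulVec_injective k D) _).finrank_eq.symm

end Matrix

theorem stmt1_general (n j : ℕ) (hj : 1 ≤ j) (C D : Matrix (Fin n) (Fin n) ℝ) :
    Module.finrank ℝ (LinearMap.ker (Gmat n j C D).mulVecLin) =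
      Module.finrank ℝ (LinearMap.ker (C * D - ((j : ℝ) ^ 2) • 1).mulVecLin) :=
  finrank_ker_fromBlocks_neg_smul_one (Nat.cast_ne_zero.mpr (Nat.one_le_iff_ne_zero.mp hj)) C D

theorem stmt1 (n j : ℕ) (hj : 1 ≤ j) (C D : Matrix (Fin n) (Fin n) ℝ)
    (hC : C.IsSymm) (hD : D.IsSymm) :
    Module.finrank ℝ (LinearMap.ker (Gmat n j C D).mulVecLin) =
      Module.finrank ℝ (LinearMap.ker (C * D - ((j : ℝ) ^ 2) • 1).mulVecLin) :=
  stmt1_general n j hj C D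
end

section
/- Let L ∈ S(2n,ℝ). For every j ≥ 1 the set Λ_j(L) = {λ > 0 : det Q_j(λL) = 0} is finite, and consequently for any a < b the set Λ(L) ∩ [a,b] is finite, where Λ(L) = ⋃_{j≥1} Λ_j(L). -/
open Matrix Polynomial

set_option linter.unreachableTactic false
set_option linter.unusedTactic false

/-- `Λ_j(L) = {λ > 0 : det Q_j(λ L) = 0}`. -/
noncomputable def Lam (n j : ℕ) (L : Matrix (Fin n ⊕ Fin n) (Fin n ⊕ Fin n) ℝ) : Set ℝ :=
  {l : ℝ | 0 < l ∧ (Qmat n j (l • L)).det = 0}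

-- A: square of Qmat n j 0
lemma QmatA (n j : ℕ) : Qmat n j 0 * Qmat n j 0 = ((j:ℝ)^2) • 1 := by
  simp [Qmat, Jmat, fromBlocks_multiply, fromBlocks_transpose, fromBlocks_smul,
    smul_smul, fromBlocks_one]
  rw [show ((j:ℝ)*j) = (j:ℝ)^2 by ring]
  ext (i|i) (k|k) <;> rcases i with i|i <;> rcases k with k|k <;>
    simp [Matrix.smul_apply, Matrix.one_apply, fromBlocks, Matrix.smul_apply]

lemma QmatB (n j : ℕ) (hj : 1 ≤ j) : (Qmat n j 0).det ≠ 0 := by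
  intro h
  have := congrArg Matrix.det (QmatA n j)
  rw [Matrix.det_mul, h, mul_zero, Matrix.det_smul, Matrix.det_one] at this
  have hj' : ((j:ℝ)^2) ≠ 0 := by positivity
  rw [mul_one] at this; exact pow_ne_zero _ hj' this.symm

noncomputable def Pm (n j : ℕ) (L : Matrix (Fin n ⊕ Fin n) (Fin n ⊕ Fin n) ℝ) :
    Matrix ((Fin n ⊕ Fin n) ⊕ (Fin n ⊕ Fin n)) ((Fin n ⊕ Fin n) ⊕ (Fin n ⊕ Fin n)) ℝ[X] :=
  fromBlocks (-(L.map fun x => C x * X)) (((Jmat n)ᵀ).map fun x => C ((j:ℝ)*x))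
    ((Jmat n).map fun x => C ((j:ℝ)*x)) (-(L.map fun x => C x * X))

lemma Pm_map (n j : ℕ) (L : Matrix (Fin n ⊕ Fin n) (Fin n ⊕ Fin n) ℝ) (l : ℝ) :
    (Pm n j L).map (evalRingHom l) = Qmat n j (l • L) := by
  ext (i|i) (k|k) <;>
    simp [Pm, Qmat, Matrix.map_apply, fromBlocks_apply₁₁, fromBlocks_apply₁₂,
      fromBlocks_apply₂₁, fromBlocks_apply₂₂, Matrix.neg_apply, Matrix.smul_apply] <;> ring

lemma Pm_det_ne (n j : ℕ) (hj : 1 ≤ j) (L : Matrix (Fin n ⊕ Fin n) (Fin n ⊕ Fin n) ℝ) :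
    (Pm n j L).det ≠ 0 := by
  intro h
  apply QmatB n j hj
  have := RingHom.map_det (evalRingHom (0:ℝ)) (Pm n j L)
  rw [RingHom.mapMatrix_apply, Pm_map, h] at this
  simpa using this.symm

lemma Lam_finite (n j : ℕ) (hj : 1 ≤ j) (L : Matrix (Fin n ⊕ Fin n) (Fin n ⊕ Fin n) ℝ) :
    (Lam n j L).Finite := by
  apply Set.Finite.subset (Polynomial.finite_setOf_isRoot (Pm_det_ne n j hj L))
  rintro l ⟨-, hdet⟩
  have := RingHom.map_det (evalRingHom l) (Pm n j L)
  rw [RingHom.mapMatrix_apply, Pm_map, hdet] at this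
  exact this

lemma Qscale (n j : ℕ) (hj : 1 ≤ j) (L : Matrix (Fin n ⊕ Fin n) (Fin n ⊕ Fin n) ℝ) (l : ℝ) :
    Qmat n j (l • L) = (j:ℝ) • Qmat n 1 ((l/j) • L) := by
  have hj' : (j:ℝ) ≠ 0 := Nat.cast_ne_zero.mpr (by omega)
  ext (i|i) (k|k) <;>
    simp [Qmat, Matrix.map_apply, fromBlocks_apply₁₁, fromBlocks_apply₁₂,
      fromBlocks_apply₂₁, fromBlocks_apply₂₂, Matrix.neg_apply, Matrix.smul_apply] <;>
    field_simp <;> ring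

lemma Lam_scale (n j : ℕ) (hj : 1 ≤ j) (L : Matrix (Fin n ⊕ Fin n) (Fin n ⊕ Fin n) ℝ)
    (l : ℝ) (hl : l ∈ Lam n j L) : l / j ∈ Lam n 1 L := by
  obtain ⟨hpos, hdet⟩ := hl
  have hj' : (0:ℝ) < (j:ℝ) := by exact_mod_cast Nat.pos_of_ne_zero (by omega)
  refine ⟨div_pos hpos hj', ?_⟩
  rw [Qscale n j hj L l, Matrix.det_smul] at hdet
  have : ((j:ℝ) ^ Fintype.card ((Fin n ⊕ Fin n) ⊕ (Fin n ⊕ Fin n))) ≠ 0 :=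
    pow_ne_zero _ (ne_of_gt hj')
  exact (mul_eq_zero.mp hdet).resolve_left this

theorem stmt4 (n : ℕ) (L : Matrix (Fin n ⊕ Fin n) (Fin n ⊕ Fin n) ℝ) (hL : L.IsSymm) :
    (∀ j : ℕ, 1 ≤ j → (Lam n j L).Finite) ∧
    (∀ a b : ℝ, a < b →
      ((⋃ j ∈ {j : ℕ | 1 ≤ j}, Lam n j L) ∩ Set.Icc a b).Finite) := by
  refine ⟨fun j hj => Lam_finite n j hj L, fun a b _ => ?_⟩
  have hF : (Lam n 1 L).Finite := Lam_finite n 1 le_rfl L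
  rcases (Lam n 1 L).eq_empty_or_nonempty with hE | hNE
  · apply Set.Finite.subset Set.finite_empty
    rintro l ⟨hl, -⟩
    simp only [Set.mem_iUnion, Set.mem_setOf_eq] at hl
    obtain ⟨j, hj, hmem⟩ := hl
    exact absurd (Lam_scale n j hj L l hmem) (by simp [hE])
  · set m := sInf (Lam n 1 L) with hm
    have hmF : m ∈ Lam n 1 L := hNE.csInf_mem hF
    have hm0 : 0 < m := hmF.1
    set N := ⌈b / m⌉₊ with hN
    apply Set.Finite.subset ((Set.finite_Icc 1 N).biUnion
      (fun j hj => Lam_finite n j hj.1 L))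
    rintro l ⟨hl, hab⟩
    simp only [Set.mem_iUnion, Set.mem_setOf_eq] at hl ⊢
    obtain ⟨j, hj, hmem⟩ := hl
    refine ⟨j, ⟨hj, ?_⟩, hmem⟩
    have hj' : (0:ℝ) < (j:ℝ) := by exact_mod_cast Nat.pos_of_ne_zero (by omega)
    have h1 : m ≤ l / j := csInf_le hF.bddBelow (Lam_scale n j hj L l hmem)
    have h2 : (j:ℝ) * m ≤ l := by
      rw [mul_comm]
      exact (le_div_iff₀ hj').mp h1
    have h3 : (j:ℝ) ≤ b / m := by
      rw [le_div_iff₀ hm0]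
      exact h2.trans hab.2
    have := h3.trans (Nat.le_ceil (b / m))
    exact_mod_cast this
end

section
/- Let A, B ∈ S(n,ℝ) and L = [[A,0],[0,B]] ∈ S(2n,ℝ). For every j ≥ 1, the set Λ_j(L) = {λ > 0 : det Q_j(λL) = 0} equals { j/√ν : ν is a strictly positive real eigenvalue of AB }. -/
/-!
Write `K = λ·diag(A, B)` and `K' = λ·diag(B, A)`. Conjugating `Q_j(K)` by the permutation that
swaps the two halves of each `2n`-block gives `[[-K', jJ], [-jJ, -K']]`, which has the same
determinant, and since `K J = J K'` and `J² = -1`, the product of `Q_j(K)` with it is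
`diag(M, M)` with `M = diag(λ²AB - j², λ²BA - j²)`. Hence `det Q_j(λL)² = det(λ²AB - j²)⁴`,
using `det(BA - t) = det(AB - t)`, so `λ ∈ Λ_j(L)` iff `(j/λ)²` is an eigenvalue of `AB`.
-/

open Matrix

namespace Matrix

theorem fromBlocks_submatrix_sum_map {l m n o l' m' n' o' α : Type*}
    (A : Matrix n l α) (B : Matrix n m α) (C : Matrix o l α) (D : Matrix o m α)
    (f : n' → n) (g : o' → o) (f' : l' → l) (g' : m' → m) :
    (fromBlocks A B C D).submatrix (Sum.map f g) (Sum.map f' g') =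
      fromBlocks (A.submatrix f f') (B.submatrix f g') (C.submatrix g f') (D.submatrix g g') := by
  ext (i | i) (k | k) <;> rfl

theorem det_mul_comm_sub_smul_one {n R : Type*} [Fintype n] [DecidableEq n] [CommRing R]
    (A B : Matrix n n R) (t : R) : (B * A - t • 1).det = (A * B - t • 1).det := by
  have h (M : Matrix n n R) : (M - t • 1).det = (-1) ^ Fintype.card n * M.charpoly.eval t := by
    rw [eval_charpoly, ← det_neg, neg_sub, smul_one_eq_diagonal, scalar_apply]
  rw [h, h, charpoly_mul_comm]

end Matrix

theorem Jmat_transpose (n : ℕ) : (Jmat n)ᵀ = -Jmat n := by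
  simp [Jmat, fromBlocks_transpose, fromBlocks_neg]

theorem Jmat_mul_self (n : ℕ) : Jmat n * Jmat n = -1 := by
  simp [Jmat, fromBlocks_multiply, fromBlocks_neg, ← fromBlocks_one]

theorem fromBlocks_diagonal_mul_Jmat {n : ℕ} (A B : Matrix (Fin n) (Fin n) ℝ) :
    fromBlocks A 0 0 B * Jmat n = Jmat n * fromBlocks B 0 0 A := by
  simp [Jmat, fromBlocks_multiply]

theorem Jmat_submatrix_swap (n : ℕ) : (Jmat n).submatrix Sum.swap Sum.swap = -Jmat n := by
  simp [Jmat, fromBlocks_neg]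

theorem Qmat_submatrix_swap (n j : ℕ) (K : Matrix (Fin n ⊕ Fin n) (Fin n ⊕ Fin n) ℝ) :
    (Qmat n j K).submatrix (Sum.map Sum.swap Sum.swap) (Sum.map Sum.swap Sum.swap) =
      fromBlocks (-K.submatrix Sum.swap Sum.swap) ((j : ℝ) • Jmat n) (-((j : ℝ) • Jmat n))
        (-K.submatrix Sum.swap Sum.swap) := by
  rw [Qmat, fromBlocks_submatrix_sum_map, Jmat_transpose]
  simp only [submatrix_neg, submatrix_smul, Pi.neg_apply, Pi.smul_apply, Jmat_submatrix_swap,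
    neg_neg, smul_neg]

theorem Qmat_mul_Qmat_submatrix_swap (n j : ℕ) (A B : Matrix (Fin n) (Fin n) ℝ) :
    Qmat n j (fromBlocks A 0 0 B) *
        (Qmat n j (fromBlocks A 0 0 B)).submatrix (Sum.map Sum.swap Sum.swap)
          (Sum.map Sum.swap Sum.swap) =
      fromBlocks (fromBlocks (A * B - (j : ℝ) ^ 2 • 1) 0 0 (B * A - (j : ℝ) ^ 2 • 1)) 0 0
        (fromBlocks (A * B - (j : ℝ) ^ 2 • 1) 0 0 (B * A - (j : ℝ) ^ 2 • 1)) := by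
  have hM : fromBlocks A 0 0 B * fromBlocks B 0 0 A - (j : ℝ) ^ 2 • 1 =
      fromBlocks (A * B - (j : ℝ) ^ 2 • 1) 0 0 (B * A - (j : ℝ) ^ 2 • 1) := by
    simp [fromBlocks_multiply, ← fromBlocks_one, fromBlocks_smul, sub_eq_add_neg, fromBlocks_neg,
      fromBlocks_add]
  rw [Qmat_submatrix_swap, Qmat, Jmat_transpose, fromBlocks_submatrix_sum_swap_sum_swap, ← hM,
    fromBlocks_multiply]
  congr 1
  all_goals
    simp [smul_smul, Jmat_mul_self, fromBlocks_diagonal_mul_Jmat, sq, sub_eq_add_neg, add_comm]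

theorem det_Qmat_fromBlocks_eq_zero_iff (n j : ℕ) (A B : Matrix (Fin n) (Fin n) ℝ) :
    (Qmat n j (fromBlocks A 0 0 B)).det = 0 ↔ (A * B - (j : ℝ) ^ 2 • 1).det = 0 := by
  set halfSwap := Equiv.sumCongr (Equiv.sumComm (Fin n) (Fin n)) (Equiv.sumComm (Fin n) (Fin n))
  have h := congr_arg det (Qmat_mul_Qmat_submatrix_swap n j A B)
  rw [det_mul, show Sum.map Sum.swap Sum.swap = ⇑halfSwap from rfl, det_submatrix_equiv_self,
    det_fromBlocks_zero₂₁, det_fromBlocks_zero₂₁, det_mul_comm_sub_smul_one A B] at h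
  rw [← mul_self_eq_zero, h, mul_self_eq_zero, mul_self_eq_zero]

theorem det_Qmat_smul_fromBlocks_eq_zero_iff (n j : ℕ) (A B : Matrix (Fin n) (Fin n) ℝ) {l : ℝ}
    (hl : l ≠ 0) :
    (Qmat n j (l • fromBlocks A 0 0 B)).det = 0 ↔ (A * B - ((j : ℝ) / l) ^ 2 • 1).det = 0 := by
  have hscale :
      (l • A) * (l • B) - (j : ℝ) ^ 2 • 1 = l ^ 2 • (A * B - ((j : ℝ) / l) ^ 2 • 1) := by
    rw [smul_sub, smul_smul, div_pow, mul_div_cancel₀ _ (pow_ne_zero 2 hl), smul_mul_smul_comm, ← sq]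
  rw [fromBlocks_smul, smul_zero, det_Qmat_fromBlocks_eq_zero_iff, hscale, det_smul, mul_eq_zero,
    or_iff_right (pow_ne_zero _ (pow_ne_zero 2 hl))]

theorem stmt5_general (n : ℕ) (A B : Matrix (Fin n) (Fin n) ℝ)
    (j : ℕ) (hj : 1 ≤ j) :
    Lam n j (fromBlocks A 0 0 B) =
      {x : ℝ | ∃ ν : ℝ, 0 < ν ∧ (A * B - ν • 1).det = 0 ∧ x = (j : ℝ) / Real.sqrt ν} := by
  have hj_pos : (0 : ℝ) < j := by exact_mod_cast hj
  ext x
  simp only [Lam, Set.mem_ofPred_eq]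
  constructor
  · rintro ⟨hx, hdet⟩
    rw [det_Qmat_smul_fromBlocks_eq_zero_iff n j A B hx.ne'] at hdet
    refine ⟨((j : ℝ) / x) ^ 2, by positivity, hdet, ?_⟩
    rw [Real.sqrt_sq (by positivity), div_div_cancel₀ hj_pos.ne']
  · rintro ⟨ν, hν, hdet, rfl⟩
    have hsqrt : 0 < Real.sqrt ν := Real.sqrt_pos.mpr hν
    refine ⟨by positivity, ?_⟩
    rwa [det_Qmat_smul_fromBlocks_eq_zero_iff n j A B (by positivity), div_div_cancel₀ hj_pos.ne',
      Real.sq_sqrt hν.le]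

theorem stmt5 (n : ℕ) (A B : Matrix (Fin n) (Fin n) ℝ) (hA : A.IsSymm) (hB : B.IsSymm)
    (j : ℕ) (hj : 1 ≤ j) :
    Lam n j (fromBlocks A 0 0 B) =
      {x : ℝ | ∃ ν : ℝ, 0 < ν ∧ (A * B - ν • 1).det = 0 ∧ x = (j : ℝ) / Real.sqrt ν} :=
  stmt5_general n A B j hj
end

section
/- If A, B ∈ S(n,ℝ) commute (AB = BA), then there exists an orthogonal matrix E and real numbers α₁,…,αₙ, β₁,…,βₙ with EᵀAE = diag(α₁,…,αₙ), EᵀBE = diag(β₁,…,βₙ), and for every j ≥ 1 the set Λ_j(L) = {λ > 0 : det Q_j(λL) = 0} (with L = [[A,0],[0,B]]) equals { j/√(α_k β_k) : k ∈ {1,…,n}, α_k β_k > 0 }. -/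
/-!
Commuting symmetric matrices have an orthonormal basis of common eigenvectors, which gives `E`,
`α`, `β`. Since `j ≠ 0` and `J` is orthogonal, a block row operation of determinant one turns
`Q_j(K)` into `[[1, *], [jJ, -K]]`, so `det Q_j(K) = det (J K Jᵀ K - j²)`. For
`K = λ diag(A, B)` the matrix `J K Jᵀ` is `λ diag(B, A)`, hence `det Q_j(λL) = det (λ² A B - j²)²`,
and conjugating by `E` turns this into `∏ k, (λ² α_k β_k - j²)²`. So `λ > 0` lies in `Λ_j(L)`
exactly when `λ² α_k β_k = j²` for some `k`.
-/

open Matrix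

open Module DirectSum

theorem LinearMap.IsSymmetric.exists_orthonormalBasis_common_eigenvectors
    {𝕜 E : Type*} [RCLike 𝕜] [NormedAddCommGroup E] [InnerProductSpace 𝕜 E]
    [FiniteDimensional 𝕜 E] {n : ℕ} (hn : finrank 𝕜 E = n) {S T : E →ₗ[𝕜] E}
    (hS : S.IsSymmetric) (hT : T.IsSymmetric) (hST : Commute S T) :
    ∃ (b : OrthonormalBasis (Fin n) 𝕜 E) (μ ν : Fin n → 𝕜),
      ∀ k, S (b k) = μ k • b k ∧ T (b k) = ν k • b k := by
  classical
  set V : 𝕜 × 𝕜 → Submodule 𝕜 E := fun μ => End.eigenspace S μ.2 ⊓ End.eigenspace T μ.1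
  have hV : IsInternal V := hS.directSum_isInternal_of_commute hT hST
  have : Fintype {μ // V μ ≠ ⊥} := hV.submodule_iSupIndep.fintypeNeBotOfFiniteDimensional
  have hV' : IsInternal fun μ : {μ // V μ ≠ ⊥} => V μ := isInternal_ne_bot_iff.mpr hV
  have hO := (hS.orthogonalFamily_eigenspace_inf_eigenspace hT).comp
    (Subtype.val_injective (p := fun μ => V μ ≠ ⊥))
  refine ⟨hV'.subordinateOrthonormalBasis hn hO,
    fun k => (hV'.subordinateOrthonormalBasisIndex hn k hO).1.2,
    fun k => (hV'.subordinateOrthonormalBasisIndex hn k hO).1.1, fun k => ?_⟩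
  obtain ⟨hSk, hTk⟩ := Submodule.mem_inf.mp (hV'.subordinateOrthonormalBasis_subordinate hn k hO)
  exact ⟨End.mem_eigenspace_iff.mp hSk, End.mem_eigenspace_iff.mp hTk⟩

theorem Matrix.transpose_mul_mul_eq_diagonal {ι R : Type*} [Fintype ι] [DecidableEq ι]
    [CommSemiring R] {E A : Matrix ι ι R} {α : ι → R} (hE : Eᵀ * E = 1)
    (hA : ∀ k, A *ᵥ Eᵀ k = α k • Eᵀ k) : Eᵀ * A * E = diagonal α := by
  have hAE : A * E = E * diagonal α := by
    ext i k
    rw [mul_diagonal]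
    simpa [mul_apply, mulVec, dotProduct, mul_comm] using congrFun (hA k) i
  rw [Matrix.mul_assoc, hAE, ← Matrix.mul_assoc, hE, Matrix.one_mul]

theorem Matrix.IsSymm.exists_orthogonal_diagonal_of_commute {ι : Type*} [Fintype ι]
    [DecidableEq ι] {A B : Matrix ι ι ℝ} (hA : A.IsSymm) (hB : B.IsSymm) (hAB : A * B = B * A) :
    ∃ (E : Matrix ι ι ℝ) (α β : ι → ℝ),
      Eᵀ * E = 1 ∧ Eᵀ * A * E = diagonal α ∧ Eᵀ * B * E = diagonal β := by
  have hS : (toEuclideanLin A).IsSymmetric :=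
    isSymmetric_toEuclideanLin_iff.mpr (isHermitian_iff_isSymm.mpr hA)
  have hT : (toEuclideanLin B).IsSymmetric :=
    isSymmetric_toEuclideanLin_iff.mpr (isHermitian_iff_isSymm.mpr hB)
  have hST : Commute (toEuclideanLin A) (toEuclideanLin B) :=
    (show Commute A B from hAB).map (toLpLinAlgEquiv 2)
  obtain ⟨b, μ, ν, hb⟩ := hS.exists_orthonormalBasis_common_eigenvectors
    finrank_euclideanSpace hT hST
  set b' := b.reindex (Fintype.equivFin ι).symm
  set E := (EuclideanSpace.basisFun ι ℝ).toBasis.toMatrix b'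
  have hE : Eᵀ * E = 1 := by
    simpa [E] using
      (EuclideanSpace.basisFun ι ℝ).toMatrix_orthonormalBasis_conjTranspose_mul_self b'
  have hcol : ∀ k, Eᵀ k = ⇑(b (Fintype.equivFin ι k)) := fun k => by
    ext i
    simp [E, b', Basis.toMatrix_apply]
  refine ⟨E, μ ∘ Fintype.equivFin ι, ν ∘ Fintype.equivFin ι, hE,
    transpose_mul_mul_eq_diagonal hE fun k => ?_, transpose_mul_mul_eq_diagonal hE fun k => ?_⟩
  · simpa [hcol, toLpLin_apply] using congrArg WithLp.ofLp (hb (Fintype.equivFin ι k)).1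
  · simpa [hcol, toLpLin_apply] using congrArg WithLp.ofLp (hb (Fintype.equivFin ι k)).2

theorem Jmat_mul_transpose (n : ℕ) : Jmat n * (Jmat n)ᵀ = 1 := by
  simp [Jmat, fromBlocks_transpose, fromBlocks_multiply, ← fromBlocks_one]

theorem Jmat_mul_fromBlocks_mul_transpose {n : ℕ} (P R : Matrix (Fin n) (Fin n) ℝ) :
    Jmat n * fromBlocks P 0 0 R * (Jmat n)ᵀ = fromBlocks R 0 0 P := by
  simp [Jmat, fromBlocks_transpose, fromBlocks_multiply]

theorem Matrix.det_fromBlocks_neg_smul_transpose {m R : Type*} [Fintype m] [DecidableEq m]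
    [Field R] {c : R} (hc : c ≠ 0) {J : Matrix m m R} (hJ : J * Jᵀ = 1) (K : Matrix m m R) :
    (fromBlocks (-K) (c • Jᵀ) (c • J) (-K)).det = (J * K * Jᵀ * K - c ^ 2 • 1).det := by
  -- `-K + (1 + K) Jᵀ J = 1`: this row operation makes the upper-left block the identity.
  set Z : Matrix (m ⊕ m) (m ⊕ m) R := fromBlocks 1 (c⁻¹ • ((1 + K) * Jᵀ)) 0 1
  have hZ : Z.det = 1 := by simp [Z]
  have hZQ : Z * fromBlocks (-K) (c • Jᵀ) (c • J) (-K) =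
      fromBlocks 1 (c • Jᵀ - c⁻¹ • ((1 + K) * Jᵀ * K)) (c • J) (-K) := by
    have hJ' : Jᵀ * J = 1 := mul_eq_one_comm.mp hJ
    simp only [Z, fromBlocks_multiply, smul_mul_smul_comm, inv_mul_cancel₀ hc, one_smul,
      Matrix.mul_assoc, hJ', Matrix.mul_one, Matrix.one_mul, Matrix.zero_mul, zero_add,
      Matrix.mul_neg, smul_mul, Matrix.add_mul]
    congr 1 <;> abel
  rw [← one_mul (fromBlocks (-K) (c • Jᵀ) (c • J) (-K)).det, ← hZ, ← det_mul, hZQ,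
    det_fromBlocks_one₁₁]
  congr 1
  simp only [Matrix.mul_sub, smul_mul_smul_comm, mul_inv_cancel₀ hc, one_smul, ← Matrix.mul_assoc,
    hJ, Matrix.add_mul, Matrix.mul_add, Matrix.one_mul, sq]
  abel

theorem det_Qmat_smul_fromBlocks {n j : ℕ} (hj : j ≠ 0) {A B : Matrix (Fin n) (Fin n) ℝ}
    (hAB : A * B = B * A) (l : ℝ) :
    (Qmat n j (l • fromBlocks A 0 0 B)).det = (l ^ 2 • (A * B) - (j : ℝ) ^ 2 • 1).det ^ 2 := by
  set M := l ^ 2 • (A * B) - (j : ℝ) ^ 2 • 1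
  have hK : Jmat n * (l • fromBlocks A 0 0 B) * (Jmat n)ᵀ * (l • fromBlocks A 0 0 B) -
      (j : ℝ) ^ 2 • 1 = fromBlocks M 0 0 M := by
    simp only [Matrix.mul_smul, Matrix.smul_mul, smul_smul, ← sq,
      Jmat_mul_fromBlocks_mul_transpose, fromBlocks_multiply, ← hAB]
    rw [← fromBlocks_one, fromBlocks_smul, fromBlocks_smul, sub_eq_add_neg, fromBlocks_neg,
      fromBlocks_add]
    simp [M, sub_eq_add_neg]
  rw [Qmat, det_fromBlocks_neg_smul_transpose (Nat.cast_ne_zero.mpr hj) (Jmat_mul_transpose n),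
    hK, det_fromBlocks_zero₁₂, sq]

theorem Matrix.det_transpose_mul_mul {ι R : Type*} [Fintype ι] [DecidableEq ι] [CommRing R]
    {E : Matrix ι ι R} (hE : Eᵀ * E = 1) (M : Matrix ι ι R) : (Eᵀ * M * E).det = M.det := by
  rw [det_mul, det_mul, mul_right_comm, ← det_mul, hE, det_one, one_mul]

theorem Matrix.det_smul_mul_sub_smul_one {ι R : Type*} [Fintype ι] [DecidableEq ι] [CommRing R]
    {E A B : Matrix ι ι R} {α β : ι → R} (hE : Eᵀ * E = 1) (hα : Eᵀ * A * E = diagonal α)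
    (hβ : Eᵀ * B * E = diagonal β) (a b : R) :
    (a • (A * B) - b • 1).det = ∏ k, (a * (α k * β k) - b) := by
  have hAB : Eᵀ * (A * B) * E = diagonal fun k => α k * β k := by
    rw [← diagonal_mul_diagonal, ← hα, ← hβ]
    simp only [Matrix.mul_assoc]
    rw [← Matrix.mul_assoc E, mul_eq_one_comm.mp hE, Matrix.one_mul]
  rw [← det_transpose_mul_mul hE, Matrix.mul_sub, Matrix.sub_mul, Matrix.mul_smul,
    Matrix.smul_mul, hAB, Matrix.mul_smul, Matrix.smul_mul, Matrix.mul_one, hE, ← diagonal_one,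
    ← diagonal_smul, ← diagonal_smul, diagonal_sub, det_diagonal]
  simp

theorem pos_and_sq_mul_eq_sq_iff {t c l : ℝ} (ht : 0 < t) :
    0 < l ∧ l ^ 2 * c = t ^ 2 ↔ 0 < c ∧ l = t / √c := by
  constructor
  · rintro ⟨hl, h⟩
    have hc : 0 < c := pos_of_mul_pos_right (h ▸ pow_pos ht 2) (pow_pos hl 2).le
    refine ⟨hc, ?_⟩
    rw [eq_div_iff (Real.sqrt_pos.mpr hc).ne', ← Real.sqrt_sq hl.le,
      ← Real.sqrt_mul (sq_nonneg l), h, Real.sqrt_sq ht.le]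
  · rintro ⟨hc, rfl⟩
    refine ⟨div_pos ht (Real.sqrt_pos.mpr hc), ?_⟩
    rw [div_pow, Real.sq_sqrt hc.le, div_mul_cancel₀ _ hc.ne']

theorem stmt7 (n : ℕ) (A B : Matrix (Fin n) (Fin n) ℝ) (hA : A.IsSymm) (hB : B.IsSymm)
    (hcomm : A * B = B * A) :
    ∃ (E : Matrix (Fin n) (Fin n) ℝ) (α β : Fin n → ℝ),
      Eᵀ * E = 1 ∧
      Eᵀ * A * E = diagonal α ∧
      Eᵀ * B * E = diagonal β ∧
      ∀ j : ℕ, 1 ≤ j →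
        Lam n j (fromBlocks A 0 0 B) =
          {x : ℝ | ∃ k : Fin n, 0 < α k * β k ∧ x = (j : ℝ) / Real.sqrt (α k * β k)} := by
  obtain ⟨E, α, β, hE, hα, hβ⟩ := hA.exists_orthogonal_diagonal_of_commute hB hcomm
  refine ⟨E, α, β, hE, hα, hβ, fun j hj => ?_⟩
  have hj0 : (0 : ℝ) < j := by exact_mod_cast hj
  ext l
  simp only [Lam, Set.mem_ofPred_eq,
    det_Qmat_smul_fromBlocks (Nat.one_le_iff_ne_zero.mp hj) hcomm,
    det_smul_mul_sub_smul_one hE hα hβ, pow_eq_zero_iff two_ne_zero, Finset.prod_eq_zero_iff,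
    Finset.mem_univ, true_and, sub_eq_zero, ← exists_and_left, pos_and_sq_mul_eq_sq_iff hj0]
end

section
/- Let A, B ∈ S(n,ℝ). If α is an eigenvalue of A and β an eigenvalue of B with αβ > 0 and the eigenspaces satisfy V_A(α) ∩ V_B(β) ≠ {0}, then αβ is a strictly positive eigenvalue of AB; consequently j/√(αβ) ∈ Λ_j(L) for every j ≥ 1, where L = [[A,0],[0,B]]. -/
open Matrix

theorem stmt8 (n : ℕ) (A B : Matrix (Fin n) (Fin n) ℝ) (hA : A.IsSymm) (hB : B.IsSymm)
    (α β : ℝ) (hαβ : 0 < α * β)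
    (hint : Module.End.eigenspace A.mulVecLin α ⊓ Module.End.eigenspace B.mulVecLin β ≠ ⊥) :
    (A * B - (α * β) • 1).det = 0 ∧
      ∀ j : ℕ, 1 ≤ j → (j : ℝ) / Real.sqrt (α * β) ∈ Lam n j (fromBlocks A 0 0 B) := by
  obtain ⟨v, hvmem, hv0⟩ := Submodule.exists_mem_ne_zero_of_ne_bot hint
  obtain ⟨hvA', hvB'⟩ := Submodule.mem_inf.mp hvmem
  have hvA : A.mulVec v = α • v := Module.End.mem_eigenspace_iff.mp hvA'
  have hvB : B.mulVec v = β • v := Module.End.mem_eigenspace_iff.mp hvB'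
  have hs : 0 < Real.sqrt (α * β) := Real.sqrt_pos.mpr hαβ
  have hs2 : Real.sqrt (α * β) * Real.sqrt (α * β) = α * β :=
    Real.mul_self_sqrt hαβ.le
  set s := Real.sqrt (α * β) with hsdef
  constructor
  · rw [← Matrix.exists_mulVec_eq_zero_iff]
    refine ⟨v, hv0, ?_⟩
    rw [Matrix.sub_mulVec, ← Matrix.mulVec_mulVec, hvB, Matrix.mulVec_smul, hvA,
      Matrix.smul_mulVec, Matrix.one_mulVec, smul_smul, mul_comm β α, sub_self]
  · intro j hj
    have hjpos : (0:ℝ) < j := by exact_mod_cast hj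
    refine ⟨div_pos hjpos hs, ?_⟩
    rw [← Matrix.exists_mulVec_eq_zero_iff]
    refine ⟨Sum.elim (Sum.elim v 0) (Sum.elim 0 ((α / s) • v)), ?_, ?_⟩
    · intro h
      apply hv0
      funext i
      exact congrFun h (Sum.inl (Sum.inl i))
    · show (Qmat n j (((j:ℝ)/s) • fromBlocks A 0 0 B)).mulVec _ = 0
      unfold Qmat Jmat
      simp only [Matrix.fromBlocks_transpose, Matrix.transpose_zero, Matrix.transpose_neg,
        Matrix.transpose_one, Matrix.fromBlocks_smul, Matrix.fromBlocks_neg,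
        Matrix.fromBlocks_mulVec, Sum.elim_comp_inl, Sum.elim_comp_inr,
        Matrix.neg_mulVec, Matrix.smul_mulVec, Matrix.mulVec_zero, Matrix.zero_mulVec,
        Matrix.one_mulVec, Matrix.mulVec_smul, hvA, hvB, smul_zero, add_zero, zero_add,
        neg_zero, smul_neg, smul_smul]
      have h1 : (↑j : ℝ)/s * α = α/s * ↑j := by ring
      have h2 : α/s * ((↑j:ℝ)/s * β) = (↑j:ℝ) := by
        have h3 : α/s * ((↑j:ℝ)/s * β) = (↑j:ℝ) * (α*β)/(s*s) := by ring
        rw [h3, hs2, mul_div_assoc, div_self hαβ.ne', mul_one]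
      rw [h1, h2]
      funext i
      rcases i with (i|i)|(i|i) <;> simp
end

section
/- Let α < 0, β < 0, j ≥ 1, λ₀ = j/√(αβ) and γ⁻(λ) = (−λ(α+β) − √(λ²(α−β)² + 4j²))/2. Then γ⁻(λ₀) = 0 and (γ⁻)'(λ₀) > 0; consequently for all sufficiently small ε > 0 with λ₀ − ε > 0, γ⁻(λ₀ − ε) < 0 < γ⁻(λ₀ + ε). -/
/-!
For `l ≥ 0`, `γ⁻(l)` is the smaller root of `ω² + l(α + β)ω + l²αβ - j²`, whose roots have
nonnegative sum `-l(α + β)` and product `l²αβ - j²`; so `γ⁻(l)` has the sign of `l²αβ - j²`,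
which vanishes exactly at `l = λ₀`. Differentiating the explicit formula and using
`√(λ₀²(α - β)² + 4j²) = -λ₀(α + β)` gives `(γ⁻)'(λ₀) = -2αβ / (α + β) > 0`.
-/

open Real

lemma sub_sqrt_sq_sub_neg_iff {b q : ℝ} (hb : 0 ≤ b) : b - √(b ^ 2 - 4 * q) < 0 ↔ q < 0 := by
  rw [sub_neg, lt_sqrt hb]
  constructor <;> intro h <;> linarith

lemma sub_sqrt_sq_sub_pos_iff {b q : ℝ} (hb : 0 < b) : 0 < b - √(b ^ 2 - 4 * q) ↔ 0 < q := by
  rw [sub_pos, sqrt_lt' hb]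
  constructor <;> intro h <;> linarith

/-- The smaller root `γ⁻(l)` in `ω` of `(lα + ω)(lβ + ω) = k²`. -/
noncomputable def smallerRoot (α β k l : ℝ) : ℝ :=
  (-l * (α + β) - √(l ^ 2 * (α - β) ^ 2 + 4 * k ^ 2)) / 2

section SmallerRoot

variable {α β : ℝ} (k : ℝ) {l : ℝ}

lemma smallerRoot_eq (α β k l : ℝ) :
    smallerRoot α β k l =
      (-l * (α + β) - √((-l * (α + β)) ^ 2 - 4 * (l ^ 2 * (α * β) - k ^ 2))) / 2 := by
  unfold smallerRoot
  congr 3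
  ring

lemma smallerRoot_neg_iff (hα : α < 0) (hβ : β < 0) (hl : 0 ≤ l) :
    smallerRoot α β k l < 0 ↔ l ^ 2 * (α * β) < k ^ 2 := by
  rw [smallerRoot_eq, div_lt_iff₀ two_pos, zero_mul, sub_sqrt_sq_sub_neg_iff (by nlinarith), sub_neg]

lemma smallerRoot_pos_iff (hα : α < 0) (hβ : β < 0) (hl : 0 < l) :
    0 < smallerRoot α β k l ↔ k ^ 2 < l ^ 2 * (α * β) := by
  rw [smallerRoot_eq, lt_div_iff₀ two_pos, zero_mul, sub_sqrt_sq_sub_pos_iff (by nlinarith),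
    sub_pos]

lemma smallerRoot_eq_zero (hα : α < 0) (hβ : β < 0) (hl : 0 ≤ l) (h : l ^ 2 * (α * β) = k ^ 2) :
    smallerRoot α β k l = 0 := by
  rw [smallerRoot_eq, h, sub_self, mul_zero, sub_zero, sqrt_sq (by nlinarith), sub_self, zero_div]

lemma hasDerivAt_smallerRoot (α β : ℝ) {k : ℝ} (hk : k ≠ 0) (l : ℝ) :
    HasDerivAt (smallerRoot α β k)
      ((-(α + β) - 2 * l * (α - β) ^ 2 / (2 * √(l ^ 2 * (α - β) ^ 2 + 4 * k ^ 2))) / 2) l := by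
  have hdisc : HasDerivAt (fun l : ℝ => l ^ 2 * (α - β) ^ 2 + 4 * k ^ 2)
      (2 * l * (α - β) ^ 2) l := by
    simpa using ((hasDerivAt_pow 2 l).mul_const ((α - β) ^ 2)).add_const (4 * k ^ 2)
  have hlin : HasDerivAt (fun l : ℝ => -l * (α + β)) (-(α + β)) l := by
    simpa using (hasDerivAt_id l).neg.mul_const (α + β)
  exact (hlin.sub (hdisc.sqrt (by positivity))).div_const 2

lemma deriv_smallerRoot_of_eq (hα : α < 0) (hβ : β < 0) (hl : 0 < l)
    (h : l ^ 2 * (α * β) = k ^ 2) :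
    deriv (smallerRoot α β k) l = -2 * (α * β) / (α + β) := by
  have hk : k ≠ 0 := by
    rintro rfl
    nlinarith [mul_pos (pow_pos hl 2) (mul_pos_of_neg_of_neg hα hβ)]
  have hb : 0 < -l * (α + β) := by nlinarith
  -- at a root of `l²αβ = k²` the discriminant is a perfect square
  have hsqrt : √(l ^ 2 * (α - β) ^ 2 + 4 * k ^ 2) = -l * (α + β) := by
    rw [← sqrt_sq hb.le]
    congr 1
    linear_combination -4 * h
  have hsum : α + β ≠ 0 := by linarith
  rw [(hasDerivAt_smallerRoot α β hk l).deriv, hsqrt]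
  field_simp
  ring

end SmallerRoot

theorem stmt12 (α β : ℝ) (hα : α < 0) (hβ : β < 0) (j : ℕ) (hj : 1 ≤ j)
    (l₀ : ℝ) (hl₀ : l₀ = (j : ℝ) / Real.sqrt (α * β))
    (γ : ℝ → ℝ)
    (hγ : ∀ l : ℝ, γ l =
      (-l * (α + β) - Real.sqrt (l ^ 2 * (α - β) ^ 2 + 4 * (j : ℝ) ^ 2)) / 2) :
    γ l₀ = 0 ∧ 0 < deriv γ l₀ ∧
      ∃ ε₀ > 0, ∀ ε : ℝ, 0 < ε → ε < ε₀ → 0 < l₀ - ε →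
        γ (l₀ - ε) < 0 ∧ 0 < γ (l₀ + ε) := by
  obtain rfl : γ = smallerRoot α β j := funext hγ
  have hαβ : 0 < α * β := mul_pos_of_neg_of_neg hα hβ
  have hj₀ : (0 : ℝ) < j := by exact_mod_cast hj
  have hl₀pos : 0 < l₀ := by rw [hl₀]; positivity
  have hl₀sq : l₀ ^ 2 * (α * β) = (j : ℝ) ^ 2 := by
    rw [hl₀, div_pow, sq_sqrt hαβ.le, div_mul_cancel₀ _ hαβ.ne']
  refine ⟨smallerRoot_eq_zero _ hα hβ hl₀pos.le hl₀sq, ?_, 1, one_pos, fun ε _ _ hlε => ⟨?_, ?_⟩⟩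
  · rw [deriv_smallerRoot_of_eq _ hα hβ hl₀pos hl₀sq]
    exact div_pos_of_neg_of_neg (by linarith) (by linarith)
  · rw [smallerRoot_neg_iff _ hα hβ hlε.le, ← hl₀sq]
    gcongr
    linarith
  · rw [smallerRoot_pos_iff _ hα hβ (by linarith), ← hl₀sq]
    gcongr
    linarith
end

section
/- Let A, B ∈ S(n,ℝ), and suppose α is an eigenvalue of A, β an eigenvalue of B with q = dim(V_A(α) ∩ V_B(β)) ≥ 1. Then for every j ≥ 1 and λ > 0, the numbers γ^{±}(λ) = (−λ(α+β) ± √(λ²(α−β)² + 4j²))/2 are eigenvalues of G_j(λL) = [[-λA, jI],[jI, -λB]], each with multiplicity at least q. -/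
open Matrix

/-!
A common eigenvector `v` (`A v = α v`, `B v = β v`) spans with `(v, 0)` and `(0, v)` a
plane invariant under `G = G_j(λA, λB)`, on which `G` acts as `[[-λα, j], [j, -λβ]]`; its
eigenvalues are `γ±`, and explicitly `(j v, (γ + λα) v)` is a `γ`-eigenvector. Since `j ≠ 0`
this embeds `V_A(α) ∩ V_B(β)` into the `γ`-eigenspace of `G`, and the geometric multiplicity of
an eigenvalue is at most its algebraic multiplicity.
-/

open Module Module.End

variable {K m : Type*} [Field K]

def sumElimSmul (a b : K) : (m → K) →ₗ[K] (m ⊕ m → K) where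
  toFun v := Sum.elim (a • v) (b • v)
  map_add' _ _ := by rw [smul_add, smul_add, Sum.elim_add_add]
  map_smul' r v := by ext (i | i) <;> simp only [smul_comm r, RingHom.id_apply, Pi.smul_apply,
    Sum.elim_inl, Sum.elim_inr]

theorem sumElimSmul_injective {a : K} (ha : a ≠ 0) (b : K) :
    Function.Injective (sumElimSmul (m := m) a b) := fun _ _ hvw =>
  smul_right_injective _ ha (congrArg (· ∘ Sum.inl) hvw)

theorem Matrix.eigenspace_le_eigenspace_neg_smul [Fintype m] (A : Matrix m m K) (α r : K) :
    eigenspace A.mulVecLin α ≤ eigenspace (-(r • A)).mulVecLin (-(r * α)) := by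
  intro v hv
  rw [mem_eigenspace_iff, mulVecLin_apply] at hv ⊢
  rw [neg_mulVec, smul_mulVec, hv, smul_smul, neg_smul]

variable [Fintype m] [DecidableEq m]

theorem sumElimSmul_mem_eigenspace_fromBlocks {C D : Matrix m m K} {a b c γ : K}
    (h : (γ - a) * (γ - b) = c ^ 2) {v : m → K}
    (hv : v ∈ eigenspace C.mulVecLin a ⊓ eigenspace D.mulVecLin b) :
    sumElimSmul c (γ - a) v ∈ eigenspace (fromBlocks C (c • 1) (c • 1) D).mulVecLin γ := by
  obtain ⟨hC, hD⟩ := Submodule.mem_inf.mp hv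
  rw [mem_eigenspace_iff, mulVecLin_apply] at hC hD ⊢
  rw [sumElimSmul, LinearMap.coe_mk, AddHom.coe_mk, fromBlocks_mulVec, Sum.elim_comp_inl,
    Sum.elim_comp_inr]
  ext (i | i) <;> simp only [mulVec_smul, smul_mulVec, one_mulVec, hC, hD, Sum.elim_inl,
    Sum.elim_inr, Pi.add_apply, Pi.smul_apply, smul_eq_mul]
  · ring
  · linear_combination -v i * h

theorem finrank_eigenspace_inf_le_finrank_eigenspace_fromBlocks {C D : Matrix m m K} {a b c γ : K}
    (hc : c ≠ 0) (h : (γ - a) * (γ - b) = c ^ 2) :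
    finrank K ↥(eigenspace C.mulVecLin a ⊓ eigenspace D.mulVecLin b) ≤
      finrank K (eigenspace (fromBlocks C (c • 1) (c • 1) D).mulVecLin γ) := by
  set S := eigenspace C.mulVecLin a ⊓ eigenspace D.mulVecLin b
  calc finrank K S = finrank K (S.map (sumElimSmul c (γ - a))) :=
        (Submodule.equivMapOfInjective _ (sumElimSmul_injective hc _) S).finrank_eq
    _ ≤ _ := Submodule.finrank_mono <| Submodule.map_le_iff_le_comap.mpr
        fun _ => sumElimSmul_mem_eigenspace_fromBlocks h

theorem Matrix.finrank_eigenspace_le_rootMultiplicity (M : Matrix m m K) (μ : K) :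
    finrank K (eigenspace M.mulVecLin μ) ≤ M.charpoly.rootMultiplicity μ :=
  M.charpoly_mulVecLin ▸ LinearMap.finrank_eigenspace_le _ μ

theorem finrank_eigenspace_inf_le_rootMultiplicity_Gmat {n j : ℕ} (hj : j ≠ 0)
    {A B : Matrix (Fin n) (Fin n) ℝ} {α β l γ : ℝ}
    (h : (γ + l * α) * (γ + l * β) = (j : ℝ) ^ 2) :
    finrank ℝ ↥(eigenspace A.mulVecLin α ⊓ eigenspace B.mulVecLin β) ≤
      (Gmat n j (l • A) (l • B)).charpoly.rootMultiplicity γ :=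
  calc _ ≤ finrank ℝ ↥(eigenspace (-(l • A)).mulVecLin (-(l * α)) ⊓
          eigenspace (-(l • B)).mulVecLin (-(l * β))) :=
        Submodule.finrank_mono (inf_le_inf (A.eigenspace_le_eigenspace_neg_smul α l)
          (B.eigenspace_le_eigenspace_neg_smul β l))
    _ ≤ finrank ℝ (eigenspace (Gmat n j (l • A) (l • B)).mulVecLin γ) :=
        finrank_eigenspace_inf_le_finrank_eigenspace_fromBlocks (Nat.cast_ne_zero.mpr hj)
          (by linear_combination h)
    _ ≤ _ := Matrix.finrank_eigenspace_le_rootMultiplicity _ γ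

theorem stmt15_general (n : ℕ) (A B : Matrix (Fin n) (Fin n) ℝ)
    (α β : ℝ) (q : ℕ)
    (hq : q = Module.finrank ℝ
      (Module.End.eigenspace A.mulVecLin α ⊓ Module.End.eigenspace B.mulVecLin β : Submodule ℝ (Fin n → ℝ)))
    (j : ℕ) (hj : 1 ≤ j) (l : ℝ) :
    q ≤ Polynomial.rootMultiplicity
        ((-l * (α + β) + Real.sqrt (l ^ 2 * (α - β) ^ 2 + 4 * (j : ℝ) ^ 2)) / 2)
        (Gmat n j (l • A) (l • B)).charpoly ∧
    q ≤ Polynomial.rootMultiplicity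
        ((-l * (α + β) - Real.sqrt (l ^ 2 * (α - β) ^ 2 + 4 * (j : ℝ) ^ 2)) / 2)
        (Gmat n j (l • A) (l • B)).charpoly := by
  subst hq
  have hs := Real.sq_sqrt (by positivity : 0 ≤ l ^ 2 * (α - β) ^ 2 + 4 * (j : ℝ) ^ 2)
  have hj0 : j ≠ 0 := Nat.one_le_iff_ne_zero.mp hj
  exact ⟨finrank_eigenspace_inf_le_rootMultiplicity_Gmat hj0 (by linear_combination hs / 4),
    finrank_eigenspace_inf_le_rootMultiplicity_Gmat hj0 (by linear_combination hs / 4)⟩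

theorem stmt15 (n : ℕ) (A B : Matrix (Fin n) (Fin n) ℝ) (hA : A.IsSymm) (hB : B.IsSymm)
    (α β : ℝ) (q : ℕ)
    (hq : q = Module.finrank ℝ
      (Module.End.eigenspace A.mulVecLin α ⊓ Module.End.eigenspace B.mulVecLin β : Submodule ℝ (Fin n → ℝ)))
    (hq1 : 1 ≤ q) (j : ℕ) (hj : 1 ≤ j) (l : ℝ) (hl : 0 < l) :
    q ≤ Polynomial.rootMultiplicity
        ((-l * (α + β) + Real.sqrt (l ^ 2 * (α - β) ^ 2 + 4 * (j : ℝ) ^ 2)) / 2)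
        (Gmat n j (l • A) (l • B)).charpoly ∧
    q ≤ Polynomial.rootMultiplicity
        ((-l * (α + β) - Real.sqrt (l ^ 2 * (α - β) ^ 2 + 4 * (j : ℝ) ^ 2)) / 2)
        (Gmat n j (l • A) (l • B)).charpoly :=
  stmt15_general n A B α β q hq j hj l
end

section
/- Let A, B ∈ S(n,ℝ), L = [[A,0],[0,B]], and let ν₀ be a strictly positive eigenvalue of AB of odd algebraic multiplicity. Fix j₀ ≥ 1, λ₀ = j₀/√ν₀, and ε > 0 small enough that λ₀ is the only zero of λ ↦ det G_{j₀}(λL) in [λ₀−ε, λ₀+ε]. Then m⁻(G_{j₀}((λ₀+ε)L)) ≠ m⁻(G_{j₀}((λ₀−ε)L)), i.e., the Morse index of G_{j₀}(λL) changes at λ₀. -/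
open Matrix

/-- The Morse index of a real matrix: the number of negative roots of its characteristic
polynomial, counted with multiplicity. -/
noncomputable def morse {m : Type*} [Fintype m] [DecidableEq m]
    (M : Matrix m m ℝ) : ℕ :=
  (M.charpoly.roots.filter (fun x => x < 0)).card

/-!
Since `det G_j(C, D) = det (C D - j² I)`, the determinant of `G_{j₀}(λL)` equals
`(-λ²)ⁿ χ_{AB}(j₀² / λ²)`. As `λ` runs through `[λ₀ - ε, λ₀ + ε]`, the point `j₀² / λ²` crosses
the root `ν₀` of `χ_{AB}`, of odd multiplicity, and meets no other root, so the determinant changes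
sign. For a symmetric matrix the sign of the determinant is `(-1) ^ m⁻`, so the Morse index
changes parity.
-/

theorem Multiset.zero_le_neg_one_pow_card_filter_neg_mul_prod {R : Type*} [CommRing R]
    [LinearOrder R] [IsStrictOrderedRing R] (s : Multiset R) :
    0 ≤ (-1 : R) ^ (s.filter (· < 0)).card * s.prod := by
  induction s using Multiset.induction_on with
  | empty => simp
  | cons a s ih =>
    by_cases ha : a < 0
    · rw [Multiset.filter_cons_of_pos (p := (· < 0)) _ ha, Multiset.card_cons,
        Multiset.prod_cons, pow_succ]
      nlinarith
    · rw [Multiset.filter_cons_of_neg (p := (· < 0)) _ ha, Multiset.prod_cons]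
      nlinarith [not_lt.mp ha]

namespace Matrix

theorem IsSymm.zero_le_neg_one_pow_morse_mul_det {m : Type*} [Fintype m] [DecidableEq m]
    {M : Matrix m m ℝ} (hM : M.IsSymm) : 0 ≤ (-1 : ℝ) ^ morse M * M.det := by
  rw [det_eq_prod_roots_charpoly_of_splits (isHermitian_iff_isSymm.mpr hM).splits_charpoly]
  exact M.charpoly.roots.zero_le_neg_one_pow_card_filter_neg_mul_prod

theorem IsSymm.morse_ne_of_det_mul_det_neg {m : Type*} [Fintype m] [DecidableEq m]
    {M N : Matrix m m ℝ} (hM : M.IsSymm) (hN : N.IsSymm) (h : M.det * N.det < 0) :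
    morse M ≠ morse N := by
  intro hMN
  have hM' := hM.zero_le_neg_one_pow_morse_mul_det
  have hN' := hN.zero_le_neg_one_pow_morse_mul_det
  rw [hMN] at hM'
  have hsq : (-1 : ℝ) ^ morse N * (-1) ^ morse N = 1 := by rw [← mul_pow]; norm_num
  nlinarith [mul_nonneg hM' hN']

theorem det_fromBlocks_neg_smul_one {n K : Type*} [Fintype n] [DecidableEq n] [Field K]
    (C D : Matrix n n K) (c : K) :
    (fromBlocks (-C) (c • 1) (c • 1) (-D)).det = (C * D - c ^ 2 • 1).det := by
  rcases eq_or_ne c 0 with rfl | hc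
  · have hsq : (-1 : K) ^ Fintype.card n * (-1) ^ Fintype.card n = 1 := by
      rw [← mul_pow]; norm_num
    simp [det_fromBlocks_zero₂₁, det_neg, det_mul]
    linear_combination C.det * D.det * hsq
  · -- a unipotent row operation brings an identity block to the top left
    have hfac : fromBlocks (-C) (c • 1) (c • 1) (-D) =
        fromBlocks 1 (-c⁻¹ • (C + 1)) 0 1 *
          fromBlocks 1 (c • 1 - c⁻¹ • ((C + 1) * D)) (c • 1) (-D) := by
      rw [fromBlocks_multiply]
      congr 1 <;> simp [smul_smul, hc, Matrix.add_mul]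
      abel
    rw [hfac, det_mul, det_fromBlocks_zero₂₁, det_fromBlocks_one₁₁, det_one, one_mul,
      one_mul, Matrix.smul_mul, Matrix.one_mul, smul_sub, smul_smul, smul_smul,
      mul_inv_cancel₀ hc, one_smul, Matrix.add_mul, Matrix.one_mul, sq]
    congr 1
    abel

end Matrix

theorem isSymm_Gmat {n : ℕ} (j : ℕ) {C D : Matrix (Fin n) (Fin n) ℝ} (hC : C.IsSymm)
    (hD : D.IsSymm) : (Gmat n j C D).IsSymm :=
  IsSymm.fromBlocks hC.neg (by simp) hD.neg

theorem det_Gmat_smul (n j : ℕ) (A B : Matrix (Fin n) (Fin n) ℝ) {l : ℝ} (hl : l ≠ 0) :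
    (Gmat n j (l • A) (l • B)).det =
      (-l ^ 2) ^ n * (A * B).charpoly.eval ((j : ℝ) ^ 2 / l ^ 2) := by
  have h : (l • A) * (l • B) - (j : ℝ) ^ 2 • 1 =
      (-l ^ 2) • (scalar (Fin n) ((j : ℝ) ^ 2 / l ^ 2) - A * B) := by
    rw [scalar_apply, ← smul_one_eq_diagonal, smul_sub, smul_smul, smul_mul_smul,
      show -l ^ 2 * ((j : ℝ) ^ 2 / l ^ 2) = -(j : ℝ) ^ 2 by field_simp]
    module
  rw [Gmat, det_fromBlocks_neg_smul_one, eval_charpoly, h, det_smul, Fintype.card_fin]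

theorem strictAntiOn_div_sq {c : ℝ} (hc : 0 < c) :
    StrictAntiOn (fun l : ℝ => c / l ^ 2) (Set.Ioi 0) := fun _ ha _ _ hab =>
  div_lt_div_of_pos_left hc (pow_pos ha 2) (pow_lt_pow_left₀ hab ha.le two_ne_zero)

section SignChange

variable {α : Type*} [ConditionallyCompleteLinearOrder α] [TopologicalSpace α] [OrderTopology α]
  [DenselyOrdered α]

theorem ContinuousOn.zero_lt_mul_of_forall_ne_zero {f : α → ℝ} {a b : α}
    (hf : ContinuousOn f (Set.uIcc a b)) (h : ∀ t ∈ Set.uIcc a b, f t ≠ 0) :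
    0 < f a * f b := by
  by_contra! hle
  have h0 : (0 : ℝ) ∈ Set.uIcc (f a) (f b) := by
    rw [Set.mem_uIcc]
    rcases mul_nonpos_iff.mp hle with hab | hab
    · exact Or.inr hab.symm
    · exact Or.inl hab
  obtain ⟨t, ht, hft⟩ := intermediate_value_uIcc hf h0
  exact h t ht hft

open Polynomial in
theorem Polynomial.eval_mul_eval_neg_of_odd_rootMultiplicity {p : ℝ[X]} {ν : ℝ} {a b : α}
    {u : α → ℝ} (hodd : Odd (p.rootMultiplicity ν)) (hu : ContinuousOn u (Set.uIcc a b))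
    (hsign : (u a - ν) * (u b - ν) < 0)
    (hroot : ∀ t ∈ Set.uIcc a b, p.eval (u t) = 0 → u t = ν) :
    p.eval (u a) * p.eval (u b) < 0 := by
  have hp : p ≠ 0 := by
    rintro rfl
    simp at hodd
  obtain ⟨g, hfac, hgν⟩ := exists_eq_pow_rootMultiplicity_mul_and_not_dvd p hp ν
  rw [dvd_iff_isRoot] at hgν
  have heval : ∀ x, p.eval x = (x - ν) ^ p.rootMultiplicity ν * g.eval x := fun x => by
    conv_lhs => rw [hfac]
    simp
  have hg : ∀ t ∈ Set.uIcc a b, g.eval (u t) ≠ 0 := fun t ht hgt =>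
    hgν <| hroot t ht (by rw [heval, hgt, mul_zero]) ▸ hgt
  have hgpos := (g.continuous.comp_continuousOn hu).zero_lt_mul_of_forall_ne_zero hg
  calc p.eval (u a) * p.eval (u b)
      = ((u a - ν) * (u b - ν)) ^ p.rootMultiplicity ν * (g.eval (u a) * g.eval (u b)) := by
        rw [heval, heval, mul_pow]; ring
    _ < 0 := mul_neg_of_neg_of_pos (hodd.pow_neg hsign) hgpos

end SignChange

theorem det_Gmat_smul_mul_det_Gmat_smul_neg {n j : ℕ} {A B : Matrix (Fin n) (Fin n) ℝ}
    {ν a b : ℝ} (hodd : Odd (Polynomial.rootMultiplicity ν (A * B).charpoly)) (ha : 0 < a)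
    (hab : a ≤ b) (hsign : ((j : ℝ) ^ 2 / a ^ 2 - ν) * ((j : ℝ) ^ 2 / b ^ 2 - ν) < 0)
    (hroot : ∀ l ∈ Set.Icc a b, (Gmat n j (l • A) (l • B)).det = 0 → (j : ℝ) ^ 2 / l ^ 2 = ν) :
    (Gmat n j (a • A) (a • B)).det * (Gmat n j (b • A) (b • B)).det < 0 := by
  have hpos : ∀ l ∈ Set.Icc a b, 0 < l := fun l hl => ha.trans_le hl.1
  have hdet : ∀ l ∈ Set.Icc a b, (Gmat n j (l • A) (l • B)).det =
      (-l ^ 2) ^ n * (A * B).charpoly.eval ((j : ℝ) ^ 2 / l ^ 2) :=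
    fun l hl => det_Gmat_smul n j A B (hpos l hl).ne'
  have hchar := Polynomial.eval_mul_eval_neg_of_odd_rootMultiplicity
    (u := fun l => (j : ℝ) ^ 2 / l ^ 2) hodd (by
      rw [Set.uIcc_of_le hab]
      exact continuousOn_const.div (by fun_prop) fun l hl => (pow_pos (hpos l hl) 2).ne')
    hsign (by
      rw [Set.uIcc_of_le hab]
      exact fun l hl h => hroot l hl (by rw [hdet l hl, h, mul_zero]))
  rw [hdet a ⟨le_rfl, hab⟩, hdet b ⟨hab, le_rfl⟩, mul_mul_mul_comm, ← mul_pow, neg_mul_neg]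
  exact mul_neg_of_pos_of_neg (pow_pos (mul_pos (pow_pos ha 2) (pow_pos (ha.trans_le hab) 2)) n)
    hchar

theorem stmt16_general (n : ℕ) (A B : Matrix (Fin n) (Fin n) ℝ) (hA : A.IsSymm) (hB : B.IsSymm)
    (ν₀ : ℝ) (hν₀ : 0 < ν₀)
    (hodd : Odd (Polynomial.rootMultiplicity ν₀ (A * B).charpoly))
    (j₀ : ℕ) (hj₀ : 1 ≤ j₀) (l₀ : ℝ) (hl₀ : l₀ = (j₀ : ℝ) / Real.sqrt ν₀)
    (ε : ℝ) (hε : 0 < ε) (hεl : 0 < l₀ - ε)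
    (hiso : ∀ l : ℝ, l ∈ Set.Icc (l₀ - ε) (l₀ + ε) →
      (Gmat n j₀ (l • A) (l • B)).det = 0 → l = l₀) :
    morse (Gmat n j₀ ((l₀ + ε) • A) ((l₀ + ε) • B)) ≠
      morse (Gmat n j₀ ((l₀ - ε) • A) ((l₀ - ε) • B)) := by
  have hj : (0 : ℝ) < j₀ := by exact_mod_cast hj₀
  have hν : (j₀ : ℝ) ^ 2 / l₀ ^ 2 = ν₀ := by
    rw [hl₀, div_pow, Real.sq_sqrt hν₀.le]
    field_simp
  have hanti := strictAntiOn_div_sq (pow_pos hj 2)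
  have hsign : ((j₀ : ℝ) ^ 2 / (l₀ - ε) ^ 2 - ν₀) * ((j₀ : ℝ) ^ 2 / (l₀ + ε) ^ 2 - ν₀) < 0 := by
    rw [← hν]
    exact mul_neg_of_pos_of_neg
      (sub_pos.mpr (hanti hεl (Set.mem_Ioi.mpr (by linarith)) (by linarith)))
      (sub_neg.mpr (hanti (Set.mem_Ioi.mpr (by linarith)) (Set.mem_Ioi.mpr (by linarith))
        (by linarith)))
  refine ((isSymm_Gmat j₀ (hA.smul _) (hB.smul _)).morse_ne_of_det_mul_det_neg
    (isSymm_Gmat j₀ (hA.smul _) (hB.smul _)) ?_).symm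
  exact det_Gmat_smul_mul_det_Gmat_smul_neg hodd hεl (by linarith) hsign
    fun l hl h => hiso l hl h ▸ hν

theorem stmt16 (n : ℕ) (A B : Matrix (Fin n) (Fin n) ℝ) (hA : A.IsSymm) (hB : B.IsSymm)
    (ν₀ : ℝ) (hν₀ : 0 < ν₀) (heig : (A * B - ν₀ • 1).det = 0)
    (hodd : Odd (Polynomial.rootMultiplicity ν₀ (A * B).charpoly))
    (j₀ : ℕ) (hj₀ : 1 ≤ j₀) (l₀ : ℝ) (hl₀ : l₀ = (j₀ : ℝ) / Real.sqrt ν₀)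
    (ε : ℝ) (hε : 0 < ε) (hεl : 0 < l₀ - ε)
    (hiso : ∀ l : ℝ, l ∈ Set.Icc (l₀ - ε) (l₀ + ε) →
      (Gmat n j₀ (l • A) (l • B)).det = 0 → l = l₀) :
    morse (Gmat n j₀ ((l₀ + ε) • A) ((l₀ + ε) • B)) ≠
      morse (Gmat n j₀ ((l₀ - ε) • A) ((l₀ - ε) • B)) :=
  stmt16_general n A B hA hB ν₀ hν₀ hodd j₀ hj₀ l₀ hl₀ ε hε hεl hiso
end
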